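/- Let a, z, t ∈ ℂ with |a| < 1, |z| < 1, and |t| < 1. With L_j^a(z) := (sqrt(1 − |a|²)/(1 − conj(a)·z)) · B^a(z)^j and B^a(z) := (z − a)/(1 − conj(a)·z), the series Σ_{j=0}^{∞} L_j^a(z) · conj(L_j^a(t)) converges and its sum equals the Cauchy kernel: Σ_{j=0}^{∞} L_j^a(z) · conj(L_j^a(t)) = 1/(1 − conj(t)·z). In particular, the sum is independent of the parameter a. -/

import Mathlib

/-- The Blaschke factor with parameter `a` in the open unit disk. -/
noncomputable def blaschke (a z : ℂ) : ℂ := (z - a) / (1 - starRingEnd ℂ a * z)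

/-- The `j`-th discrete Laguerre function with parameter `a`. -/
noncomputable def laguerre (a : ℂ) (j : ℕ) (z : ℂ) : ℂ :=
  ((Real.sqrt (1 - ‖a‖ ^ 2) : ℂ) / (1 - starRingEnd ℂ a * z)) * blaschke a z ^ j

/-!
Writing `L_j^a = L_0^a · (B^a)^j`, the `j`-th term of the series is `L_0^a(z) conj(L_0^a(t)) q^j`
with `q = B^a(z) conj(B^a(t))`, and `|q| < 1` because `B^a` maps the disk into itself. The
geometric series therefore sums to `L_0^a(z) conj(L_0^a(t)) / (1 - q)`, and the polynomial
identity `(1 - ā z)(1 - a t̄) - (z - a)(t̄ - ā) = (1 - |a|²)(1 - t̄ z)` turns this quotient into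
`1 / (1 - t̄ z)`.
-/

open ComplexConjugate

lemma one_sub_conj_mul_ne_zero {a z : ℂ} (ha : ‖a‖ < 1) (hz : ‖z‖ ≤ 1) :
    1 - conj a * z ≠ 0 := by
  have : ‖conj a * z‖ < 1 := by
    rw [norm_mul, Complex.norm_conj]
    exact mul_lt_one_of_nonneg_of_lt_one_left (norm_nonneg a) ha hz
  exact sub_ne_zero.mpr fun h => by simp [← h] at this

lemma one_sub_mul_conj_ne_zero {a t : ℂ} (ha : ‖a‖ < 1) (ht : ‖t‖ ≤ 1) :
    1 - a * conj t ≠ 0 := by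
  simpa using (map_ne_zero conj).mpr (one_sub_conj_mul_ne_zero ha ht)

lemma one_sub_blaschke_mul_conj_blaschke {a z t : ℂ} (hz : 1 - conj a * z ≠ 0)
    (ht : 1 - a * conj t ≠ 0) :
    1 - blaschke a z * conj (blaschke a t)
      = (1 - a * conj a) * (1 - conj t * z) / ((1 - conj a * z) * (1 - a * conj t)) := by
  simp only [blaschke, map_div₀, map_sub, map_one, map_mul, Complex.conj_conj]
  rw [div_mul_div_comm, one_sub_div (mul_ne_zero hz ht)]
  ring

lemma normSq_one_sub_conj_mul_sub_normSq_sub (a z : ℂ) :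
    Complex.normSq (1 - conj a * z) - Complex.normSq (z - a)
      = (1 - Complex.normSq a) * (1 - Complex.normSq z) := by
  simp only [Complex.normSq_apply, Complex.sub_re, Complex.sub_im, Complex.mul_re,
    Complex.mul_im, Complex.conj_re, Complex.conj_im, Complex.one_re, Complex.one_im]
  ring

lemma norm_blaschke_lt_one {a z : ℂ} (ha : ‖a‖ < 1) (hz : ‖z‖ < 1) :
    ‖blaschke a z‖ < 1 := by
  have hden := one_sub_conj_mul_ne_zero ha hz.le
  have hpos : 0 < (1 - Complex.normSq a) * (1 - Complex.normSq z) := by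
    rw [Complex.normSq_eq_norm_sq, Complex.normSq_eq_norm_sq]
    exact mul_pos (by nlinarith [norm_nonneg a]) (by nlinarith [norm_nonneg z])
  rw [blaschke, norm_div, div_lt_one (norm_pos_iff.mpr hden),
    ← sq_lt_sq₀ (norm_nonneg _) (norm_nonneg _), ← Complex.normSq_eq_norm_sq,
    ← Complex.normSq_eq_norm_sq]
  linarith [normSq_one_sub_conj_mul_sub_normSq_sub a z]

lemma laguerre_eq_laguerre_zero_mul_pow (a : ℂ) (j : ℕ) (z : ℂ) :
    laguerre a j z = laguerre a 0 z * blaschke a z ^ j := by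
  simp [laguerre]

lemma laguerre_zero_mul_conj_laguerre_zero {a : ℂ} (ha : ‖a‖ ≤ 1) (z t : ℂ) :
    laguerre a 0 z * conj (laguerre a 0 t)
      = (1 - a * conj a) / ((1 - conj a * z) * (1 - a * conj t)) := by
  have hsqrt : (Real.sqrt (1 - ‖a‖ ^ 2) : ℂ) * Real.sqrt (1 - ‖a‖ ^ 2) = 1 - a * conj a := by
    rw [← Complex.ofReal_mul, Real.mul_self_sqrt (by nlinarith [norm_nonneg a]),
      Complex.mul_conj, Complex.normSq_eq_norm_sq]
    push_cast; ring
  simp only [laguerre, pow_zero, mul_one, map_div₀, Complex.conj_ofReal, map_sub, map_one,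
    map_mul, Complex.conj_conj]
  rw [div_mul_div_comm, hsqrt]

theorem hasSum_laguerre_mul_conj_laguerre {a z t : ℂ} (ha : ‖a‖ < 1) (hz : ‖z‖ < 1)
    (ht : ‖t‖ < 1) :
    HasSum (fun j : ℕ => laguerre a j z * conj (laguerre a j t)) (1 / (1 - conj t * z)) := by
  set q := blaschke a z * conj (blaschke a t)
  have hq : ‖q‖ < 1 := by
    rw [norm_mul, Complex.norm_conj]
    exact mul_lt_one_of_nonneg_of_lt_one_left (norm_nonneg _) (norm_blaschke_lt_one ha hz)
      (norm_blaschke_lt_one ha ht).le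
  have hterm : ∀ j : ℕ, laguerre a j z * conj (laguerre a j t)
      = laguerre a 0 z * conj (laguerre a 0 t) * q ^ j := fun j => by
    rw [laguerre_eq_laguerre_zero_mul_pow a j z, laguerre_eq_laguerre_zero_mul_pow a j t, mul_pow]
    simp only [map_mul, map_pow]
    ring
  have hsum :=
    (hasSum_geometric_of_norm_lt_one hq).mul_left (laguerre a 0 z * conj (laguerre a 0 t))
  simp only [← hterm] at hsum
  have hden_z := one_sub_conj_mul_ne_zero ha hz.le
  have hden_t := one_sub_mul_conj_ne_zero ha ht.le
  have hs : 1 - a * conj a ≠ 0 := by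
    rw [Complex.mul_conj, Complex.normSq_eq_norm_sq]
    exact_mod_cast (by nlinarith [norm_nonneg a] : (1 : ℝ) - ‖a‖ ^ 2 ≠ 0)
  rwa [laguerre_zero_mul_conj_laguerre_zero ha.le, ← div_eq_mul_inv,
    one_sub_blaschke_mul_conj_blaschke hden_z hden_t,
    div_div_div_cancel_right₀ (mul_ne_zero hden_z hden_t), div_mul_cancel_left₀ hs,
    ← one_div] at hsum

/-- **Laguerre expansion of the Cauchy kernel.** For `|a| < 1`, `|z| < 1`, `|t| < 1`,
the series `∑_j L_j^a(z) conj(L_j^a(t))` converges to the Cauchy kernel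
`1/(1 − conj t · z)`; in particular the sum does not depend on `a`. -/
theorem laguerre_expansion_cauchy_kernel (a z t : ℂ) (ha : ‖a‖ < 1)
    (hz : ‖z‖ < 1) (ht : ‖t‖ < 1) :
    Summable (fun j : ℕ => laguerre a j z * starRingEnd ℂ (laguerre a j t)) ∧
    ∑' j : ℕ, laguerre a j z * starRingEnd ℂ (laguerre a j t)
      = 1 / (1 - starRingEnd ℂ t * z) :=
  let h := hasSum_laguerre_mul_conj_laguerre ha hz ht
  ⟨h.summable, h.tsum_eq⟩
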